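/- arXiv:math/0007122 — 2 statements merged into one kernel-verified Lean document; each statement's English description precedes it below -/
import Mathlib

section
/- Let V be a real inner product space with orthogonal complex structure J and let A be a symmetric endomorphism commuting with J whose eigenvalues are λ and μ with λ < μ. Let J̄ be the orthogonal complex structure equal to J on the λ-eigenspace and -J on the μ-eigenspace. Then the bilinear form ρ̄(x,y) := g(J̄Ax, y) is alternating and J̄-invariant, and equals λα - μβ where α and β are the restrictions of Ω(x,y) = g(Jx,y) to the λ- and μ-eigenspaces respectively (extended by zero via orthogonal projections). -/
open scoped RealInnerProductSpace

/-- The Ricci form of the flipped structure: `ρ̄(x,y) = g(J̄Ax,y)` is alternating,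
`J̄`-invariant and equals `λα - μβ` with `α, β` the restrictions of `Ω` to the
eigenspaces. -/
theorem stmt12 {V : Type*} [NormedAddCommGroup V] [InnerProductSpace ℝ V]
    [FiniteDimensional ℝ V]
    (J Jb A pr : V →ₗ[ℝ] V) (lam mu : ℝ) (hlt : lam < mu)
    (Elam Emu : Submodule ℝ V)
    (hJ2 : ∀ x, J (J x) = -x)
    (hJorth : ∀ x y, ⟪J x, J y⟫ = ⟪x, y⟫)
    (hAsym : ∀ x y, ⟪A x, y⟫ = ⟪x, A y⟫)
    (hAJ : A ∘ₗ J = J ∘ₗ A)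
    (hAlam : ∀ x ∈ Elam, A x = lam • x)
    (hAmu : ∀ x ∈ Emu, A x = mu • x)
    (hcompl : IsCompl Elam Emu)
    (hperp : ∀ x ∈ Elam, ∀ y ∈ Emu, ⟪x, y⟫ = 0)
    (hJlam : ∀ x ∈ Elam, J x ∈ Elam) (hJmu : ∀ x ∈ Emu, J x ∈ Emu)
    (hJblam : ∀ x ∈ Elam, Jb x = J x) (hJbmu : ∀ x ∈ Emu, Jb x = -(J x))
    (hprmem : ∀ x, pr x ∈ Elam) (hprid : ∀ x ∈ Elam, pr x = x)
    (hprker : ∀ x ∈ Emu, pr x = 0) (hprcompl : ∀ x, x - pr x ∈ Emu) :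
    (∀ x, ⟪Jb (A x), x⟫ = 0) ∧
      (∀ x y, ⟪Jb (A x), y⟫ = -⟪Jb (A y), x⟫) ∧
      (∀ x y, ⟪Jb (A (Jb x)), Jb y⟫ = ⟪Jb (A x), y⟫) ∧
      (∀ x y, ⟪Jb (A x), y⟫ =
        lam * ⟪J (pr x), pr y⟫ - mu * (⟪J x, y⟫ - ⟪J (pr x), pr y⟫)) := by
  -- J is skew-adjoint
  have hskew : ∀ x y : V, ⟪J x, y⟫ = -⟪x, J y⟫ := by
    intro x y
    have h1 := hJorth x (J y)
    rw [hJ2 y, inner_neg_right] at h1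
    linarith
  have hdiag : ∀ z : V, ⟪J z, z⟫ = 0 := by
    intro z
    have h1 := hskew z z
    have h2 : ⟪z, J z⟫ = ⟪J z, z⟫ := real_inner_comm _ _
    linarith
  -- decomposition lemmas
  have hJbA : ∀ x : V, Jb (A x) = lam • J (pr x) - mu • J (x - pr x) := by
    intro x
    have hx : A x = lam • pr x + mu • (x - pr x) := by
      have : A x = A (pr x) + A (x - pr x) := by
        rw [← map_add]; congr 1; abel
      rw [this, hAlam _ (hprmem x), hAmu _ (hprcompl x)]
    rw [hx, map_add, map_smul, map_smul, hJblam _ (hprmem x), hJbmu _ (hprcompl x),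
      smul_neg]
    abel
  have hJbx : ∀ x : V, Jb x = J (pr x) - J (x - pr x) := by
    intro x
    have : Jb x = Jb (pr x) + Jb (x - pr x) := by
      rw [← map_add]; congr 1; abel
    rw [this, hJblam _ (hprmem x), hJbmu _ (hprcompl x)]; abel
  -- splitting inner products against decomposition of y
  have hsplit : ∀ (a b : V) (y : V), a ∈ Elam → b ∈ Emu →
      ⟪a - b, y⟫ = ⟪a, pr y⟫ - ⟪b, y - pr y⟫ := by
    intro a b y ha hb
    have h1 : ⟪a, y - pr y⟫ = 0 := hperp _ ha _ (hprcompl y)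
    have h2 : ⟪b, pr y⟫ = 0 := by
      rw [real_inner_comm]; exact hperp _ (hprmem y) _ hb
    have hy : y = pr y + (y - pr y) := by abel
    calc ⟪a - b, y⟫ = ⟪a, y⟫ - ⟪b, y⟫ := by rw [inner_sub_left]
      _ = (⟪a, pr y⟫ + ⟪a, y - pr y⟫) - (⟪b, pr y⟫ + ⟪b, y - pr y⟫) := by
          rw [← inner_add_right, ← inner_add_right, ← hy]
      _ = ⟪a, pr y⟫ - ⟪b, y - pr y⟫ := by rw [h1, h2]; ring
  -- the main formula
  have main : ∀ x y : V, ⟪Jb (A x), y⟫ =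
      lam * ⟪J (pr x), pr y⟫ - mu * ⟪J (x - pr x), y - pr y⟫ := by
    intro x y
    rw [hJbA x, hsplit _ _ y (Submodule.smul_mem _ _ (hJlam _ (hprmem x)))
      (Submodule.smul_mem _ _ (hJmu _ (hprcompl x))), real_inner_smul_left,
      real_inner_smul_left]
  -- the Omega splitting
  have omg : ∀ x y : V, ⟪J x, y⟫ = ⟪J (pr x), pr y⟫ + ⟪J (x - pr x), y - pr y⟫ := by
    intro x y
    have hx : J x = J (pr x) - (-(J (x - pr x))) := by
      rw [sub_neg_eq_add, ← map_add]; congr 1; abel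
    rw [hx, hsplit _ _ y (hJlam _ (hprmem x))
      (Submodule.neg_mem _ (hJmu _ (hprcompl x))), inner_neg_left]
    ring
  refine ⟨?_, ?_, ?_, ?_⟩
  · intro x
    rw [main x x, hdiag, hdiag]; ring
  · intro x y
    rw [main x y, main y x]
    have h1 : ⟪J (pr y), pr x⟫ = -⟪J (pr x), pr y⟫ := by
      have ha := hskew (pr x) (pr y)
      have hb := real_inner_comm (J (pr y)) (pr x)
      linarith
    have h2 : ⟪J (y - pr y), x - pr x⟫ = -⟪J (x - pr x), y - pr y⟫ := by
      have ha := hskew (x - pr x) (y - pr y)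
      have hb := real_inner_comm (J (y - pr y)) (x - pr x)
      linarith
    rw [h1, h2]; ring
  · intro x y
    have hpJb : ∀ z : V, pr (Jb z) = J (pr z) := by
      intro z
      rw [hJbx z, map_sub, hprid _ (hJlam _ (hprmem z)), hprker _ (hJmu _ (hprcompl z))]
      abel
    have hq : ∀ z : V, Jb z - pr (Jb z) = -(J (z - pr z)) := by
      intro z
      rw [hpJb, hJbx z]; abel
    rw [main (Jb x) (Jb y), main x y, hq, hq, hpJb, hpJb]
    simp only [map_neg, inner_neg_left, inner_neg_right, neg_neg, hJorth]
  · intro x y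
    rw [main x y, omg x y]; ring
end

section
/- Let V be a 4-dimensional real inner product space with orthogonal complex structure J, and let J̄ be another orthogonal complex structure commuting with J, with J̄ ≠ ±J. Then J̄ induces the opposite orientation to J: for any vector x ≠ 0, the orientation determined by a basis adapted to J̄ is opposite to that determined by J; equivalently, the fundamental 2-forms Ω and Ω̄ satisfy Ω̄ ∧ Ω̄ = -Ω ∧ Ω. -/
open scoped RealInnerProductSpace

set_option maxHeartbeats 2000000

/-- In real dimension 4, a second orthogonal complex structure `J̄` commuting with
`J` and different from `±J` induces the opposite orientation:
`Ω̄ ∧ Ω̄ = -Ω ∧ Ω`, expressed via the shuffle formula for the wedge of 2-forms. -/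
theorem stmt15 {V : Type*} [NormedAddCommGroup V] [InnerProductSpace ℝ V]
    [FiniteDimensional ℝ V] (hdim : Module.finrank ℝ V = 4)
    (J Jb : V →ₗ[ℝ] V)
    (hJ2 : ∀ x, J (J x) = -x) (hJb2 : ∀ x, Jb (Jb x) = -x)
    (hJorth : ∀ x y, ⟪J x, J y⟫ = ⟪x, y⟫)
    (hJborth : ∀ x y, ⟪Jb x, Jb y⟫ = ⟪x, y⟫)
    (hcomm : J ∘ₗ Jb = Jb ∘ₗ J)
    (hne : Jb ≠ J) (hne' : Jb ≠ -J) :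
    ∀ x₁ x₂ x₃ x₄ : V,
      ⟪Jb x₁, x₂⟫ * ⟪Jb x₃, x₄⟫ - ⟪Jb x₁, x₃⟫ * ⟪Jb x₂, x₄⟫ +
          ⟪Jb x₁, x₄⟫ * ⟪Jb x₂, x₃⟫ =
        -(⟪J x₁, x₂⟫ * ⟪J x₃, x₄⟫ - ⟪J x₁, x₃⟫ * ⟪J x₂, x₄⟫ +
            ⟪J x₁, x₄⟫ * ⟪J x₂, x₃⟫) := by
  -- pointwise commutation
  have hc : ∀ x, J (Jb x) = Jb (J x) := fun x => DFunLike.congr_fun hcomm x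
  -- skew-adjointness
  have hJsk : ∀ x y : V, ⟪J x, y⟫ = -⟪x, J y⟫ := by
    intro x y
    have h := hJorth x (J y)
    rw [hJ2 y, inner_neg_right] at h
    linarith
  have hJbsk : ∀ x y : V, ⟪Jb x, y⟫ = -⟪x, Jb y⟫ := by
    intro x y
    have h := hJborth x (Jb y)
    rw [hJb2 y, inner_neg_right] at h
    linarith
  -- the product involution
  set K : V →ₗ[ℝ] V := -(J ∘ₗ Jb) with hKdef
  have hKapp : ∀ x, K x = -(J (Jb x)) := fun x => by simp [hKdef]
  have hJbK : ∀ x, J (K x) = Jb x := by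
    intro x
    rw [hKapp, map_neg, hJ2, neg_neg]
  have hKK : ∀ x, K (K x) = x := by
    intro x
    rw [hKapp (K x), hc (K x), hJbK, hJb2, neg_neg]
  have hKsa : ∀ x y, ⟪K x, y⟫ = ⟪x, K y⟫ := by
    intro x y
    rw [hKapp, hKapp, inner_neg_left, inner_neg_right]
    rw [hJsk (Jb x) y, hJbsk x (J y), hc]
    ring
  have hJK : ∀ x, K (J x) = J (K x) := by
    intro x
    rw [hKapp (J x), hKapp x, ← hc, map_neg]
  -- eigenvectors
  obtain ⟨xp, hxp⟩ : ∃ x, Jb x ≠ -(J x) := by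
    by_contra h
    push_neg at h
    exact hne' (LinearMap.ext fun x => by simp [h x])
  obtain ⟨xm, hxm⟩ : ∃ x, Jb x ≠ J x := by
    by_contra h
    push_neg at h
    exact hne (LinearMap.ext h)
  set u0 : V := xp + K xp with hu0
  have hKu0 : K u0 = u0 := by rw [hu0, map_add, hKK, add_comm]
  have hu0ne : u0 ≠ 0 := by
    intro h
    apply hxp
    rw [hu0] at h
    have h1 : K xp = -xp := eq_neg_of_add_eq_zero_right h
    rw [← hJbK xp, h1, map_neg]
  set v0 : V := xm - K xm with hv0
  have hKv0 : K v0 = -v0 := by rw [hv0, map_sub, hKK]; abel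
  have hv0ne : v0 ≠ 0 := by
    intro h
    apply hxm
    rw [hv0] at h
    have h1 : K xm = xm := (sub_eq_zero.mp h).symm
    rw [← hJbK xm, h1]
  -- normalize
  set u : V := ‖u0‖⁻¹ • u0 with hu
  have hKu : K u = u := by rw [hu, map_smul, hKu0]
  have hnu : ‖u‖ = 1 := norm_smul_inv_norm hu0ne
  set v : V := ‖v0‖⁻¹ • v0 with hv
  have hKv : K v = -v := by rw [hv, map_smul, hKv0, smul_neg]
  have hnv : ‖v‖ = 1 := norm_smul_inv_norm hv0ne
  have hKJu : K (J u) = J u := by rw [hJK, hKu]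
  have hKJv : K (J v) = -(J v) := by rw [hJK, hKv, map_neg]
  clear hKdef hKapp hu0 hv0 hu hv hKu0 hKv0 hu0ne hv0ne hKK hJK hxp hxm
  clear_value K u0 v0 u v
  clear u0 v0 xp xm
  -- Gram matrix
  have huu : ⟪u, u⟫ = 1 := by
    rw [real_inner_self_eq_norm_mul_norm, hnu]; norm_num
  have hvv : ⟪v, v⟫ = 1 := by
    rw [real_inner_self_eq_norm_mul_norm, hnv]; norm_num
  have hJuJu : ⟪J u, J u⟫ = 1 := by rw [hJorth]; exact huu
  have hJvJv : ⟪J v, J v⟫ = 1 := by rw [hJorth]; exact hvv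
  have hxJx : ∀ x : V, ⟪x, J x⟫ = 0 := by
    intro x
    have h := hJsk x x
    have h2 := real_inner_comm x (J x)
    linarith
  have horth : ∀ x y : V, K x = x → K y = -y → ⟪x, y⟫ = 0 := by
    intro x y hx hy
    have h1 : ⟪x, y⟫ = -⟪x, y⟫ := by
      conv_lhs => rw [← hx]
      rw [hKsa, hy, inner_neg_right]
    linarith
  have huJu : ⟪u, J u⟫ = 0 := hxJx u
  have hJuu : ⟪J u, u⟫ = 0 := by rw [real_inner_comm]; exact huJu
  have hvJv : ⟪v, J v⟫ = 0 := hxJx v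
  have hJvv : ⟪J v, v⟫ = 0 := by rw [real_inner_comm]; exact hvJv
  have huv : ⟪u, v⟫ = 0 := horth u v hKu hKv
  have hvu : ⟪v, u⟫ = 0 := by rw [real_inner_comm]; exact huv
  have huJv : ⟪u, J v⟫ = 0 := horth u (J v) hKu hKJv
  have hJvu : ⟪J v, u⟫ = 0 := by rw [real_inner_comm]; exact huJv
  have hJuv : ⟪J u, v⟫ = 0 := horth (J u) v hKJu hKv
  have hvJu : ⟪v, J u⟫ = 0 := by rw [real_inner_comm]; exact hJuv
  have hJuJv : ⟪J u, J v⟫ = 0 := horth (J u) (J v) hKJu hKJv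
  have hJvJu : ⟪J v, J u⟫ = 0 := by rw [real_inner_comm]; exact hJuJv
  -- orthonormal basis
  have hnJu : ‖J u‖ = 1 := by
    have h : ‖J u‖ * ‖J u‖ = 1 := by
      rw [← real_inner_self_eq_norm_mul_norm]; exact hJuJu
    nlinarith [norm_nonneg (J u)]
  have hnJv : ‖J v‖ = 1 := by
    have h : ‖J v‖ * ‖J v‖ = 1 := by
      rw [← real_inner_self_eq_norm_mul_norm]; exact hJvJv
    nlinarith [norm_nonneg (J v)]
  have hon : Orthonormal ℝ ![u, J u, v, J v] := by
    constructor
    · intro i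
      fin_cases i <;>
        simp only [Matrix.cons_val_zero, Matrix.cons_val_one, Matrix.head_cons,
          Matrix.cons_val_two, Matrix.tail_cons, Matrix.cons_val_three] <;>
        first | exact hnu | exact hnJu | exact hnv | exact hnJv
    · intro i j hij
      fin_cases i <;> fin_cases j <;>
        simp only [Matrix.cons_val_zero, Matrix.cons_val_one, Matrix.head_cons,
          Matrix.cons_val_two, Matrix.tail_cons, Matrix.cons_val_three] <;>
        first
          | exact absurd rfl hij
          | exact huJu | exact hJuu | exact hvJv | exact hJvv | exact huv | exact hvu
          | exact huJv | exact hJvu | exact hJuv | exact hvJu | exact hJuJv | exact hJvJu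
  have hli := hon.linearIndependent
  have hcard : Fintype.card (Fin 4) = Module.finrank ℝ V := by simp [hdim]
  let b := basisOfLinearIndependentOfCardEqFinrank hli hcard
  have hb : ⇑b = ![u, J u, v, J v] := coe_basisOfLinearIndependentOfCardEqFinrank hli hcard
  have hdecomp : ∀ x : V, ∃ p q r s : ℝ, x = p • u + q • J u + r • v + s • J v := by
    intro x
    refine ⟨b.repr x 0, b.repr x 1, b.repr x 2, b.repr x 3, ?_⟩
    have hx := b.sum_repr x
    rw [Fin.sum_univ_four] at hx
    rw [show b 0 = u from by rw [hb]; rfl, show b 1 = J u from by rw [hb]; rfl,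
        show b 2 = v from by rw [hb]; rfl, show b 3 = J v from by rw [hb]; rfl] at hx
    exact hx.symm
  -- action of J and Jb on the basis
  have hJbu : Jb u = J u := by rw [← hJbK, hKu]
  have hJbJu : Jb (J u) = -u := by rw [← hJbK, hKJu, hJ2]
  have hJbv : Jb v = -(J v) := by rw [← hJbK, hKv, map_neg]
  have hJbJv : Jb (J v) = v := by rw [← hJbK, hKJv, map_neg, hJ2, neg_neg]
  -- expand
  intro x₁ x₂ x₃ x₄
  obtain ⟨p₁, q₁, r₁, s₁, h₁⟩ := hdecomp x₁
  obtain ⟨p₂, q₂, r₂, s₂, h₂⟩ := hdecomp x₂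
  obtain ⟨p₃, q₃, r₃, s₃, h₃⟩ := hdecomp x₃
  obtain ⟨p₄, q₄, r₄, s₄, h₄⟩ := hdecomp x₄
  subst h₁ h₂ h₃ h₄
  simp only [map_add, map_smul, hJ2, hJbu, hJbJu, hJbv, hJbJv, smul_neg,
    inner_add_left, inner_add_right, real_inner_smul_left, real_inner_smul_right,
    inner_neg_left, inner_neg_right,
    huu, hvv, hJuJu, hJvJv, huJu, hJuu, hvJv, hJvv, huv, hvu, huJv, hJvu, hJuv, hvJu,
    hJuJv, hJvJu]
  ring
end
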